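/- arXiv:2301.06446 — 2 statements merged into one kernel-verified Lean document; each statement's English description precedes it below -/
import Mathlib

section
/- Let m ≡ 2 (mod 6) with m ≥ 8 and n = 2^m − 1. For i ∈ {0,1,2}, define T_i = { 1 ≤ j ≤ n−1 : w₂(j) ≡ i (mod 3) }. Then |T_0| = |T_2| = (2^m − 4)/3 and |T_1| = (2^m + 2)/3. -/
def w2 (x : ℕ) : ℕ := (Nat.digits 2 x).sum

/-!
Let c_i(m) be the number of j < 2^m with w₂(j) ≡ i (mod 3). Splitting [0, 2^(m+1)) at 2^m,
where the leading bit adds one to w₂, gives c_i(m+1) = c_i(m) + c_{i-1}(m). Since the c_i(m)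
sum to 2^m, the deviations 3 c_i(m) - 2^m are negated and rotated at each step, so
3 c_i(m) = 2^m + (-1)^m (3 [i + m ≡ 0] - 1). The set T_i differs from the range [0, 2^m) only by
j = 0, with w₂ = 0, and j = 2^m - 1, with w₂ = m ≡ 2.
-/

open Finset

lemma w2_eq_mod_two_add_w2_div_two (x : ℕ) : w2 x = x % 2 + w2 (x / 2) := by
  rcases Nat.eq_zero_or_pos x with rfl | hx
  · rfl
  · rw [w2, Nat.digits_def' (by norm_num) hx, List.sum_cons, w2]

lemma w2_two_pow_add {m k : ℕ} (hk : k < 2 ^ m) : w2 (2 ^ m + k) = w2 k + 1 := by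
  induction m generalizing k with
  | zero =>
    obtain rfl : k = 0 := by omega
    rfl
  | succ m ih =>
    rw [w2_eq_mod_two_add_w2_div_two, w2_eq_mod_two_add_w2_div_two k,
      show (2 ^ (m + 1) + k) / 2 = 2 ^ m + k / 2 by omega, ih (by omega)]
    omega

lemma w2_two_pow_sub_one (m : ℕ) : w2 (2 ^ m - 1) = m := by
  induction m with
  | zero => rfl
  | succ m ih =>
    have := Nat.one_le_two_pow (n := m)
    rw [show 2 ^ (m + 1) - 1 = 2 ^ m + (2 ^ m - 1) by omega, w2_two_pow_add (by omega), ih]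

def w2ResidueCount (m i : ℕ) : ℕ := #{j ∈ range (2 ^ m) | w2 j % 3 = i}

lemma w2ResidueCount_succ (m : ℕ) {i : ℕ} (hi : i < 3) :
    w2ResidueCount (m + 1) i = w2ResidueCount m i + w2ResidueCount m ((i + 2) % 3) := by
  have hshift : {k ∈ range (2 ^ m) | w2 (2 ^ m + k) % 3 = i} =
      {k ∈ range (2 ^ m) | w2 k % 3 = (i + 2) % 3} := by
    refine filter_congr fun k hk => ?_
    rw [w2_two_pow_add (mem_range.mp hk)]
    omega
  rw [w2ResidueCount, pow_succ, mul_two, range_add, filter_union, filter_map,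
    card_union_of_disjoint ((disjoint_range_addLeftEmbedding _ _).mono (filter_subset _ _)
      (map_subset_map.mpr (filter_subset _ _))), card_map]
  exact congrArg _ (congrArg card hshift)

lemma three_mul_w2ResidueCount (m : ℕ) {i : ℕ} (hi : i < 3) :
    3 * (w2ResidueCount m i : ℤ) = 2 ^ m + (-1) ^ m * if (i + m) % 3 = 0 then 2 else -1 := by
  induction m generalizing i with
  | zero => interval_cases i <;> decide
  | succ m ih =>
    rw [w2ResidueCount_succ m hi, Nat.cast_add, mul_add, ih hi, ih (Nat.mod_lt _ (by norm_num)),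
      show ((i + 2) % 3 + m) % 3 = ((i + m) % 3 + 2) % 3 by omega,
      show (i + (m + 1)) % 3 = ((i + m) % 3 + 1) % 3 by omega]
    have ha : (i + m) % 3 < 3 := Nat.mod_lt _ (by norm_num)
    generalize (i + m) % 3 = a at ha ⊢
    interval_cases a <;> simp only [pow_succ] <;> norm_num <;> ring

lemma card_filter_range_eq_card_filter_Icc {N : ℕ} (hN : 2 ≤ N) (p : ℕ → Prop) [DecidablePred p] :
    #{j ∈ range N | p j} =
      (if p 0 then 1 else 0) + #{j ∈ Icc 1 (N - 2) | p j} + if p (N - 1) then 1 else 0 := by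
  obtain ⟨K, rfl⟩ : ∃ K, N = K + 1 + 1 := ⟨N - 2, by omega⟩
  rw [show K + 1 + 1 - 2 = K by omega, Nat.add_sub_cancel, card_filter, card_filter,
    sum_range_succ, sum_range_succ', ← Ico_add_one_right_eq_Icc, sum_Ico_eq_sum_range,
    Nat.add_sub_cancel]
  simp only [add_comm 1]
  ring

theorem stmt14_general (m : ℕ) (hm : m % 6 = 2) (n : ℕ) (hn : n = 2 ^ m - 1) :
    let T : ℕ → Finset ℕ := fun i => (Finset.Icc 1 (n - 1)).filter (fun j => w2 j % 3 = i)
    (T 0).card = (2 ^ m - 4) / 3 ∧ (T 1).card = (2 ^ m + 2) / 3 ∧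
    (T 2).card = (2 ^ m - 4) / 3 := by
  intro T
  have hm3 : m % 3 = 2 := by omega
  have hcount (i : ℕ) : w2ResidueCount m i =
      (if 0 = i then 1 else 0) + #(T i) + if m % 3 = i then 1 else 0 := by
    rw [w2ResidueCount, card_filter_range_eq_card_filter_Icc (Nat.one_lt_two_pow (by omega)),
      w2_two_pow_sub_one, show 2 ^ m - 2 = n - 1 by omega]
    rfl
  have hsign : (-1 : ℤ) ^ m = 1 := Even.neg_one_pow ⟨m / 2, by omega⟩
  have h0 := three_mul_w2ResidueCount m (i := 0) (by norm_num)
  have h1 := three_mul_w2ResidueCount m (i := 1) (by norm_num)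
  have h2 := three_mul_w2ResidueCount m (i := 2) (by norm_num)
  simp only [hcount, hsign] at h0 h1 h2
  norm_num [Nat.add_mod, hm3] at h0 h1 h2
  obtain ⟨K, hK⟩ : ∃ K, 2 ^ m = K := ⟨_, rfl⟩
  rw [show (2 : ℤ) ^ m = K by exact_mod_cast hK] at h0 h1 h2
  rw [hK]
  omega

theorem stmt14 (m : ℕ) (hm : m % 6 = 2) (hm8 : 8 ≤ m) (n : ℕ) (hn : n = 2 ^ m - 1) :
    let T : ℕ → Finset ℕ := fun i => (Finset.Icc 1 (n - 1)).filter (fun j => w2 j % 3 = i)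
    (T 0).card = (2 ^ m - 4) / 3 ∧ (T 1).card = (2 ^ m + 2) / 3 ∧
    (T 2).card = (2 ^ m - 4) / 3 :=
  stmt14_general m hm n hn
end

section
/- Let m ≡ 1 (mod 8) with m ≥ 9, n = 2^m − 1, and v = 2^{(m+1)/2} − 1. Then gcd(v, n) = 1, and for every integer a with 1 ≤ a ≤ 2^{(m−1)/2} + 2, the binary weight of (a·v mod n) is congruent to 1 or 2 modulo 4. -/
/-!
Write `N = 2 ^ j` with `m = 2j + 1`, so `v = 2N - 1` and `n = 2N² - 1`. For `1 ≤ a ≤ N`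
the product `a v = (a - 1) 2^(j+1) + (2^(j+1) - a)` is already reduced, and its two blocks of
bits are complementary, so its weight is `j + 1`. The remaining two multipliers reduce to
`(N + 1) v ≡ N` and `(N + 2) v ≡ (N - 1) + 2N`, of weights `1` and `j + 1`. Since `8 ∣ m - 1`,
`j + 1 ≡ 1 (mod 4)`. Finally `gcd(2^(j+1) - 1, 2^(2j+1) - 1) = 2^gcd(j+1, 2j+1) - 1 = 1`.
-/

namespace Nat

theorem digits_sum_of_lt {b r : ℕ} (hr : r < b) : (b.digits r).sum = r := by
  rcases Nat.eq_zero_or_pos r with rfl | hr0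
  · simp
  · simp [digits_of_lt b r hr0.ne' hr]

theorem digits_sum_add_base_pow_mul {b k x : ℕ} (hb : 1 < b) (hx : x < b ^ k) (y : ℕ) :
    (b.digits (x + b ^ k * y)).sum = (b.digits x).sum + (b.digits y).sum := by
  rcases Nat.eq_zero_or_pos y with rfl | hy
  · simp
  rw [← Nat.add_sub_cancel' ((digits_length_le_iff hb x).2 hx),
    ← digits_append_zeroes_append_digits hb hy]
  simp

theorem digits_sum_add_base_mul {b r : ℕ} (hb : 1 < b) (hr : r < b) (y : ℕ) :
    (b.digits (r + b * y)).sum = r + (b.digits y).sum := by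
  have h := digits_sum_add_base_pow_mul hb (k := 1) (by rwa [pow_one]) y
  rwa [pow_one, digits_sum_of_lt hr] at h

theorem digits_sum_add_digits_sum_complement {b k x : ℕ} (hb : 1 < b) (hx : x < b ^ k) :
    (b.digits x).sum + (b.digits (b ^ k - 1 - x)).sum = (b - 1) * k := by
  induction k generalizing x with
  | zero => simp_all
  | succ k ih =>
    have hq : x / b < b ^ k := Nat.div_lt_of_lt_mul (by rwa [← pow_succ'])
    have hr : x % b < b := Nat.mod_lt _ (by omega)
    obtain ⟨s, hs⟩ : ∃ s, b ^ k = x / b + 1 + s := ⟨b ^ k - (x / b + 1), by omega⟩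
    have hcompl : b ^ (k + 1) - 1 - x = (b - 1 - x % b) + b * (b ^ k - 1 - x / b) := by
      have hx' := Nat.mod_add_div x b
      rw [pow_succ', hs, show x / b + 1 + s - 1 - x / b = s by omega, mul_add, mul_add, mul_one]
      omega
    nth_rewrite 1 [← Nat.mod_add_div x b]
    rw [hcompl, digits_sum_add_base_mul hb hr, digits_sum_add_base_mul hb (by omega), mul_add_one]
    have := ih hq
    omega

theorem digits_sum_mul_base_pow_sub_one {b k a : ℕ} (hb : 1 < b) (ha : 1 ≤ a)
    (hak : a ≤ b ^ k) :
    (b.digits (a * (b ^ k - 1))).sum = (b - 1) * k := by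
  obtain ⟨c, rfl⟩ : ∃ c, a = c + 1 := ⟨a - 1, by omega⟩
  have hsplit : (c + 1) * (b ^ k - 1) = (b ^ k - 1 - c) + b ^ k * c := by
    have : c ≤ c * b ^ k := Nat.le_mul_of_pos_right c (Nat.pos_of_ne_zero (by positivity))
    rw [add_one_mul, Nat.mul_sub_one, mul_comm (b ^ k)]
    omega
  rw [hsplit, digits_sum_add_base_pow_mul hb (by omega), add_comm,
    digits_sum_add_digits_sum_complement hb (by omega)]

theorem pow_succ_sub_one_gcd_pow_two_mul_add_one_sub_one (b j : ℕ) :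
    gcd (b ^ (j + 1) - 1) (b ^ (2 * j + 1) - 1) = b - 1 := by
  rw [pow_sub_one_gcd_pow_sub_one, show 2 * j + 1 = j + (j + 1) by ring, gcd_add_self_right]
  simp

end Nat

section Residues

variable {j : ℕ} (hj : 1 ≤ j)
include hj

theorem w2_mul_mod_of_le {a : ℕ} (ha : 1 ≤ a) (haj : a ≤ 2 ^ j) :
    w2 (a * (2 ^ (j + 1) - 1) % (2 ^ (2 * j + 1) - 1)) = j + 1 := by
  have hlt : a * (2 ^ (j + 1) - 1) < 2 ^ (2 * j + 1) - 1 := by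
    have hN : 2 ≤ 2 ^ j := Nat.le_self_pow (by omega) 2
    rw [pow_succ', show 2 ^ (2 * j + 1) = 2 * 2 ^ j * 2 ^ j by ring]
    generalize 2 ^ j = N at *
    zify [(by omega : 1 ≤ 2 * N), (by nlinarith : 1 ≤ 2 * N * N)]
    nlinarith
  rw [Nat.mod_eq_of_lt hlt, w2, Nat.digits_sum_mul_base_pow_sub_one one_lt_two ha
    (haj.trans (Nat.pow_le_pow_right two_pos j.le_succ))]
  omega

theorem w2_two_pow_add_one_mul_mod :
    w2 ((2 ^ j + 1) * (2 ^ (j + 1) - 1) % (2 ^ (2 * j + 1) - 1)) = 1 := by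
  have hres : (2 ^ j + 1) * (2 ^ (j + 1) - 1) % (2 ^ (2 * j + 1) - 1) = 2 ^ j := by
    have hN : 2 ≤ 2 ^ j := Nat.le_self_pow (by omega) 2
    rw [pow_succ', show 2 ^ (2 * j + 1) = 2 * 2 ^ j * 2 ^ j by ring]
    generalize 2 ^ j = N at *
    have hsplit : (N + 1) * (2 * N - 1) = (2 * N * N - 1) + N := by
      zify [(by omega : 1 ≤ 2 * N), (by nlinarith : 1 ≤ 2 * N * N)]
      ring
    rw [hsplit, Nat.add_mod_left, Nat.mod_eq_of_lt]
    zify [(by nlinarith : 1 ≤ 2 * N * N)]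
    nlinarith
  rw [hres, w2, ← mul_one (2 ^ j), Nat.digits_base_pow_mul one_lt_two one_pos]
  simp

theorem w2_two_pow_add_two_mul_mod :
    w2 ((2 ^ j + 2) * (2 ^ (j + 1) - 1) % (2 ^ (2 * j + 1) - 1)) = j + 1 := by
  have hres : (2 ^ j + 2) * (2 ^ (j + 1) - 1) % (2 ^ (2 * j + 1) - 1) =
      (2 ^ j - 1) + 2 ^ j * 2 := by
    have hN : 2 ≤ 2 ^ j := Nat.le_self_pow (by omega) 2
    rw [pow_succ', show 2 ^ (2 * j + 1) = 2 * 2 ^ j * 2 ^ j by ring]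
    generalize 2 ^ j = N at *
    have hsplit : (N + 2) * (2 * N - 1) = (2 * N * N - 1) + ((N - 1) + N * 2) := by
      zify [(by omega : 1 ≤ N), (by omega : 1 ≤ 2 * N), (by nlinarith : 1 ≤ 2 * N * N)]
      ring
    rw [hsplit, Nat.add_mod_left, Nat.mod_eq_of_lt]
    zify [(by omega : 1 ≤ N), (by nlinarith : 1 ≤ 2 * N * N)]
    nlinarith
  have hsub := Nat.digits_sum_mul_base_pow_sub_one (k := j) one_lt_two le_rfl Nat.one_le_two_pow
  rw [one_mul] at hsub
  rw [hres, w2, Nat.digits_sum_add_base_pow_mul one_lt_two (Nat.sub_lt Nat.one_le_two_pow one_pos),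
    hsub]
  simp

theorem w2_mul_mod_eq_succ_or_eq_one {a : ℕ} (ha : 1 ≤ a) (haj : a ≤ 2 ^ j + 2) :
    w2 (a * (2 ^ (j + 1) - 1) % (2 ^ (2 * j + 1) - 1)) = j + 1 ∨
      w2 (a * (2 ^ (j + 1) - 1) % (2 ^ (2 * j + 1) - 1)) = 1 := by
  rcases (by omega : a ≤ 2 ^ j ∨ a = 2 ^ j + 1 ∨ a = 2 ^ j + 2) with hle | rfl | rfl
  · exact Or.inl (w2_mul_mod_of_le hj ha hle)
  · exact Or.inr (w2_two_pow_add_one_mul_mod hj)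
  · exact Or.inl (w2_two_pow_add_two_mul_mod hj)

end Residues

theorem stmt17 (m : ℕ) (hm : m % 8 = 1) (hm9 : 9 ≤ m)
    (n v : ℕ) (hn : n = 2 ^ m - 1) (hv : v = 2 ^ ((m + 1) / 2) - 1) :
    Nat.gcd v n = 1 ∧
    ∀ a : ℕ, 1 ≤ a → a ≤ 2 ^ ((m - 1) / 2) + 2 →
      w2 (a * v % n) % 4 = 1 ∨ w2 (a * v % n) % 4 = 2 := by
  obtain ⟨j, rfl⟩ : ∃ j, m = 2 * j + 1 := ⟨m / 2, by omega⟩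
  rw [show (2 * j + 1 + 1) / 2 = j + 1 by omega] at hv
  rw [show (2 * j + 1 - 1) / 2 = j by omega]
  subst hn hv
  refine ⟨Nat.pow_succ_sub_one_gcd_pow_two_mul_add_one_sub_one 2 j, fun a ha haj => Or.inl ?_⟩
  rcases w2_mul_mod_eq_succ_or_eq_one (by omega) ha haj with h | h <;> omega
end
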